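/- arXiv:2301.04462 — 2 statements merged into one kernel-verified Lean document; each statement's English description precedes it below -/
import Mathlib

section
/- Minimizers of the quantile regression loss are exactly the τ-quantiles: let ν be a probability distribution on ℝ with finite mean, τ ∈ (0,1), and define the quantile regression loss L(v) = E_{Z∼ν}[ (τ·1{Z > v} + (1−τ)·1{Z < v}) · |Z − v| ] for v ∈ ℝ. Then v minimizes L over ℝ if and only if P_{Z∼ν}(Z < v) ≤ τ ≤ P_{Z∼ν}(Z ≤ v); equivalently, the set of minimizers of L is the interval [F⁻¹_ν(τ), F̄⁻¹_ν(τ)]. -/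
open MeasureTheory ProbabilityTheory Set
open scoped ENNReal

/-- Generalized inverse CDF (least τ-quantile). -/
noncomputable def invCDF (ν : Measure ℝ) (τ : ℝ) : ℝ := sInf {y | τ ≤ cdf ν y}

/-- Upper inverse CDF (greatest τ-quantile). -/
noncomputable def upInvCDF (ν : Measure ℝ) (τ : ℝ) : ℝ := sInf {y | τ < cdf ν y}

/-- Quantile level τ_i = (2i-1)/(2m), with `i : Fin m` zero-indexed. -/
noncomputable def qlevel (m : ℕ) (i : Fin m) : ℝ := (2 * (i : ℝ) + 1) / (2 * m)

/-- The uniform m-atom distribution with the given particle locations. -/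
noncomputable def paramDistOne {m : ℕ} (θ : Fin m → ℝ) : Measure ℝ :=
  (m : ℝ≥0∞)⁻¹ • ∑ i : Fin m, Measure.dirac (θ i)

/-- Return-distribution function associated with quantile parameters θ. -/
noncomputable def paramDist {X : Type*} {m : ℕ} (θ : X → Fin m → ℝ) : X → Measure ℝ :=
  fun x => paramDistOne (θ x)

/-- The distributional Bellman operator T^π. -/
noncomputable def bellman {X : Type*} [MeasurableSpace X]
    (P : X → Measure (ℝ × X)) (γ : ℝ) (η : X → Measure ℝ) : X → Measure ℝ :=
  fun x => (P x).bind (fun p => (η p.2).map (fun z => p.1 + γ * z))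

/-- The quantile projection Π^λ, parameter-level output. -/
noncomputable def projParam {X : Type*} {m : ℕ} (lam : X → Fin m → ℝ)
    (η : X → Measure ℝ) : X → Fin m → ℝ :=
  fun x i => (1 - lam x i) * invCDF (η x) (qlevel m i) + lam x i * upInvCDF (η x) (qlevel m i)

/-- The quantile projection Π^λ on return-distribution functions. -/
noncomputable def proj {X : Type*} {m : ℕ} (lam : X → Fin m → ℝ)
    (η : X → Measure ℝ) : X → Measure ℝ :=
  paramDist (projParam lam η)

/-- The projected distributional Bellman operator Π^λ T^π acting on parameters. -/
noncomputable def projBellmanParam {X : Type*} [MeasurableSpace X]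
    (P : X → Measure (ℝ × X)) (γ : ℝ) {m : ℕ} (lam : X → Fin m → ℝ)
    (θ : X → Fin m → ℝ) : X → Fin m → ℝ :=
  projParam lam (bellman P γ (paramDist θ))

/-- The cube [0,1]^{X×[m]} of interpolation parameters. -/
def unitCube (X : Type*) (m : ℕ) : Set (X → Fin m → ℝ) :=
  {lam | ∀ x i, lam x i ∈ Set.Icc (0:ℝ) 1}

/-- Wasserstein-∞ distance (valued in [0,∞]). -/
noncomputable def winf (ν ν' : Measure ℝ) : ℝ≥0∞ :=
  ⨆ t : Set.Ioo (0:ℝ) 1, ENNReal.ofReal |invCDF ν t - invCDF ν' t|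

/-- Extension of w∞ to return-distribution functions: max over states. -/
noncomputable def wbar {X : Type*} (η η' : X → Measure ℝ) : ℝ≥0∞ :=
  ⨆ x : X, winf (η x) (η' x)

/-- Wasserstein-1 distance between probability distributions on ℝ. -/
noncomputable def w1 (ν ν' : Measure ℝ) : ℝ :=
  ∫ t in Set.Ioo (0:ℝ) 1, |invCDF ν t - invCDF ν' t|

/-- Uniform m-atom distributions. -/
noncomputable def FQ (m : ℕ) : Set (Measure ℝ) :=
  {ν | ∃ z : Fin m → ℝ, ν = paramDistOne z}

/-! For `v ≤ u` the pinball loss `ρ` satisfies pointwise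
`(u - v) (1{z ≤ v} - τ) ≤ ρ(u, z) - ρ(v, z) ≤ (u - v) (1{z < u} - τ)`; integrating,
`(u - v) (F v - τ) ≤ L u - L v ≤ (u - v) (P(Z < u) - τ)`.
Hence `v` minimizes `L` on `[v, ∞)` iff `τ ≤ F v`, and on `(-∞, v]` iff `P(Z < v) ≤ τ`; the
converse directions use that `F` is right-continuous and `P(Z < v) = F(v⁻)`. The same two facts
turn `τ ≤ F v` into `F⁻¹(τ) ≤ v` and `F(v⁻) ≤ τ` into `v ≤ F̄⁻¹(τ)`. -/

open Filter Topology Function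

noncomputable def pinballLoss (τ v z : ℝ) : ℝ :=
  (τ * (if v < z then (1:ℝ) else 0) + (1 - τ) * (if z < v then (1:ℝ) else 0)) * |z - v|

noncomputable def quantileLoss (ν : Measure ℝ) (τ v : ℝ) : ℝ := ∫ z, pinballLoss τ v z ∂ν

lemma pinballLoss_eq_max_add (τ v z : ℝ) :
    pinballLoss τ v z = max (v - z) 0 + τ * (z - v) := by
  rcases lt_trichotomy z v with h | rfl | h
  · simp [pinballLoss, h, h.not_gt, abs_of_neg (sub_neg.2 h), max_eq_left (sub_pos.2 h).le]
    ring
  · simp [pinballLoss]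
  · simp [pinballLoss, h, h.not_gt, abs_of_pos (sub_pos.2 h), max_eq_right (sub_neg.2 h).le]

lemma integrable_pinballLoss {ν : Measure ℝ} [IsFiniteMeasure ν] (hmean : Integrable id ν)
    (τ v : ℝ) : Integrable (pinballLoss τ v) ν := by
  rw [show pinballLoss τ v = _ from funext (pinballLoss_eq_max_add τ v)]
  exact ((integrable_const v).sub hmean).pos_part.add ((hmean.sub (integrable_const v)).const_mul τ)

lemma pinballLoss_sub_le {τ v u : ℝ} (hvu : v ≤ u) (z : ℝ) :
    pinballLoss τ u z - pinballLoss τ v z ≤ (u - v) * ((Iio u).indicator 1 z - τ) := by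
  simp only [pinballLoss_eq_max_add, max_def, indicator, mem_Iio, Pi.one_apply]
  split_ifs <;> linarith

lemma le_pinballLoss_sub {τ v u : ℝ} (hvu : v ≤ u) (z : ℝ) :
    (u - v) * ((Iic v).indicator 1 z - τ) ≤ pinballLoss τ u z - pinballLoss τ v z := by
  simp only [pinballLoss_eq_max_add, max_def, indicator, mem_Iic, Pi.one_apply]
  split_ifs <;> linarith

lemma Monotone.leftLim_le_iff {α β : Type*} [LinearOrder α] [TopologicalSpace α]
    [OrderTopology α] [ConditionallyCompleteLinearOrder β] [TopologicalSpace β] [OrderTopology β]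
    {f : α → β} (hf : Monotone f) {x : α} [(𝓝[<] x).NeBot] {c : β} :
    leftLim f x ≤ c ↔ ∀ y < x, f y ≤ c :=
  ⟨fun h _ hy => (hf.le_leftLim hy).trans h,
    fun h => _root_.le_of_tendsto (hf.tendsto_leftLim x) (eventually_nhdsWithin_of_forall h)⟩

lemma measureReal_Iio_eq_leftLim_cdf (ν : Measure ℝ) [IsProbabilityMeasure ν] (x : ℝ) :
    ν.real (Iio x) = leftLim (cdf ν) x := by
  have h := (cdf ν).measure_Iio (tendsto_cdf_atBot ν) x
  rw [measure_cdf, sub_zero] at h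
  rw [measureReal_def, h, ENNReal.toReal_ofReal]
  exact (cdf_nonneg ν (x - 1)).trans ((monotone_cdf ν).le_leftLim (sub_one_lt x))

section Quantile

variable (ν : Measure ℝ) {τ : ℝ}

lemma bddBelow_setOf_le_cdf (hτ : 0 < τ) : BddBelow {y | τ ≤ cdf ν y} := by
  obtain ⟨y₀, hy₀⟩ := ((tendsto_cdf_atBot ν).eventually (eventually_lt_nhds hτ)).exists
  exact ⟨y₀, fun y hy => not_lt.1 fun hyy => hy₀.not_ge (hy.trans (monotone_cdf ν hyy.le))⟩

lemma exists_lt_cdf (hτ : τ < 1) : ∃ y, τ < cdf ν y :=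
  ((tendsto_cdf_atTop ν).eventually (eventually_gt_nhds hτ)).exists

lemma le_cdf_invCDF (hτ : τ < 1) : τ ≤ cdf ν (invCDF ν τ) := by
  obtain ⟨y₀, hy₀⟩ := exists_lt_cdf ν hτ
  refine ge_of_tendsto (((cdf ν).right_continuous _).mono Ioi_subset_Ici_self)
    (eventually_nhdsWithin_of_forall fun y hy => ?_)
  obtain ⟨s, hs, hsy⟩ := exists_lt_of_csInf_lt ⟨y₀, hy₀.le⟩ hy
  exact hs.trans (monotone_cdf ν hsy.le)

lemma invCDF_le_iff (hτ0 : 0 < τ) (hτ1 : τ < 1) {v : ℝ} : invCDF ν τ ≤ v ↔ τ ≤ cdf ν v :=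
  ⟨fun h => (le_cdf_invCDF ν hτ1).trans (monotone_cdf ν h),
    fun h => csInf_le (bddBelow_setOf_le_cdf ν hτ0) h⟩

lemma le_upInvCDF_iff (hτ0 : 0 < τ) (hτ1 : τ < 1) {v : ℝ} :
    v ≤ upInvCDF ν τ ↔ ∀ u < v, cdf ν u ≤ τ := by
  refine ⟨fun h u huv => not_lt.1 fun hu => ?_, fun h => ?_⟩
  · have hbdd := (bddBelow_setOf_le_cdf ν hτ0).mono fun y (hy : τ < cdf ν y) => hy.le
    exact (h.trans (csInf_le hbdd hu)).not_gt huv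
  · exact le_csInf (exists_lt_cdf ν hτ1) fun y hy => not_lt.1 fun hyv => (h y hyv).not_gt hy

end Quantile

section QuantileLoss

variable {ν : Measure ℝ} [IsProbabilityMeasure ν] {τ : ℝ}

lemma integrable_mul_indicator_one_sub {s : Set ℝ} (hs : MeasurableSet s) (c τ : ℝ) :
    Integrable (fun z => c * (s.indicator 1 z - τ)) ν :=
  (((integrable_const (1 : ℝ)).indicator hs).sub (integrable_const τ)).const_mul c

lemma integral_mul_indicator_one_sub {s : Set ℝ} (hs : MeasurableSet s) (c τ : ℝ) :
    ∫ z, c * (s.indicator 1 z - τ) ∂ν = c * (ν.real s - τ) := by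
  have h1 : Integrable (s.indicator 1) ν := (integrable_const (1 : ℝ)).indicator hs
  rw [integral_const_mul, integral_sub h1 (integrable_const τ),
    integral_indicator_one hs, integral_const, probReal_univ, one_smul]

lemma quantileLoss_sub_le (hmean : Integrable id ν) {v u : ℝ} (hvu : v ≤ u) :
    quantileLoss ν τ u - quantileLoss ν τ v ≤ (u - v) * (ν.real (Iio u) - τ) := by
  rw [quantileLoss, quantileLoss, ← integral_sub (integrable_pinballLoss hmean τ u)
    (integrable_pinballLoss hmean τ v), ← integral_mul_indicator_one_sub measurableSet_Iio]
  exact integral_mono ((integrable_pinballLoss hmean τ u).sub (integrable_pinballLoss hmean τ v))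
    (integrable_mul_indicator_one_sub measurableSet_Iio _ _) (pinballLoss_sub_le hvu)

lemma le_quantileLoss_sub (hmean : Integrable id ν) {v u : ℝ} (hvu : v ≤ u) :
    (u - v) * (ν.real (Iic v) - τ) ≤ quantileLoss ν τ u - quantileLoss ν τ v := by
  rw [quantileLoss, quantileLoss, ← integral_sub (integrable_pinballLoss hmean τ u)
    (integrable_pinballLoss hmean τ v), ← integral_mul_indicator_one_sub measurableSet_Iic]
  exact integral_mono (integrable_mul_indicator_one_sub measurableSet_Iic _ _)
    ((integrable_pinballLoss hmean τ u).sub (integrable_pinballLoss hmean τ v))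
    (le_pinballLoss_sub hvu)

lemma forall_quantileLoss_le_iff (hmean : Integrable id ν) {v : ℝ} :
    (∀ u, quantileLoss ν τ v ≤ quantileLoss ν τ u) ↔
      ν.real (Iio v) ≤ τ ∧ τ ≤ ν.real (Iic v) := by
  refine ⟨fun hmin => ⟨?_, ?_⟩, fun ⟨hIio, hIic⟩ u => ?_⟩
  · rw [measureReal_Iio_eq_leftLim_cdf, (monotone_cdf ν).leftLim_le_iff]
    refine fun u huv => not_lt.1 fun hu => ?_
    have hsub := le_quantileLoss_sub (τ := τ) hmean huv.le
    rw [← cdf_eq_real] at hsub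
    linarith [hmin u, mul_pos (sub_pos.2 huv) (sub_pos.2 hu)]
  · refine not_lt.1 fun hv => ?_
    rw [← cdf_eq_real] at hv
    obtain ⟨u, hu, hvu : v < u⟩ := ((((cdf ν).right_continuous v).mono Ioi_subset_Ici_self
      |>.eventually (eventually_lt_nhds hv)).and self_mem_nhdsWithin).exists
    have hIio : ν.real (Iio u) ≤ cdf ν u := cdf_eq_real ν u ▸ measureReal_mono Iio_subset_Iic_self
    have hsub := quantileLoss_sub_le (τ := τ) hmean hvu.le
    linarith [hmin u, mul_pos (sub_pos.2 hvu) (sub_pos.2 (hIio.trans_lt hu))]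
  · rcases le_total v u with hvu | huv
    · linarith [le_quantileLoss_sub (τ := τ) hmean hvu,
        mul_nonneg (sub_nonneg.2 hvu) (sub_nonneg.2 hIic)]
    · linarith [quantileLoss_sub_le (τ := τ) hmean huv,
        mul_nonneg (sub_nonneg.2 huv) (sub_nonneg.2 hIio)]

end QuantileLoss

/-- Minimizers of the quantile regression loss are exactly the τ-quantiles:
`v` minimizes `L` iff `P(Z < v) ≤ τ ≤ P(Z ≤ v)`; equivalently the set of minimizers is the
interval `[F⁻¹_ν(τ), F̄⁻¹_ν(τ)]`. -/
theorem quantile_regression_loss_minimizers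
    (ν : Measure ℝ) [IsProbabilityMeasure ν] (hmean : Integrable id ν)
    (τ : ℝ) (hτ : τ ∈ Set.Ioo (0:ℝ) 1)
    (L : ℝ → ℝ)
    (hL : ∀ v, L v = ∫ z,
        (τ * (if v < z then (1:ℝ) else 0) + (1 - τ) * (if z < v then (1:ℝ) else 0))
          * |z - v| ∂ν) :
    (∀ v : ℝ, (∀ u : ℝ, L v ≤ L u) ↔
      ((ν (Set.Iio v)).toReal ≤ τ ∧ τ ≤ (ν (Set.Iic v)).toReal))
    ∧ {v : ℝ | ∀ u : ℝ, L v ≤ L u} = Set.Icc (invCDF ν τ) (upInvCDF ν τ) := by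
  obtain ⟨hτ0, hτ1⟩ := hτ
  obtain rfl : L = quantileLoss ν τ := funext hL
  have hmin (v : ℝ) := forall_quantileLoss_le_iff (τ := τ) hmean (v := v)
  refine ⟨hmin, ?_⟩
  ext v
  rw [mem_ofPred_eq, hmin, mem_Icc, invCDF_le_iff ν hτ0 hτ1, le_upInvCDF_iff ν hτ0 hτ1,
    cdf_eq_real, measureReal_Iio_eq_leftLim_cdf, (monotone_cdf ν).leftLim_le_iff, and_comm]
end

section
/- Inward drift of the QTD vector field at large parameter values: fix δ ∈ (0,1) with 1 − δ > γ, and let M > 0 be such that for every state x ∈ X, the reward distribution R^π(x) satisfies F_{R^π(x)}((1−δ−γ)M) > 1 − 1/(4m) and F_{R^π(x)}(−(1−δ−γ)M) < 1/(4m). Then for any θ ∈ ℝ^{X×[m]} with ‖θ‖_∞ > M: (i) if θ(x,i) > (1−δ)·‖θ‖_∞, then τ_i − F_{(T^π θ)(x)}(θ(x,i)−) ≤ −1/(4m); and (ii) if θ(x,i) < −(1−δ)·‖θ‖_∞, then τ_i − F_{(T^π θ)(x)}(θ(x,i)) ≥ 1/(4m). -/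
open MeasureTheory ProbabilityTheory Set
open scoped ENNReal

/-!
Every atom of `η_θ` lies in `[-‖θ‖, ‖θ‖]`, so the Bellman target at `x` is the reward law shifted
by at most `γ‖θ‖`: `F_R(t - γ‖θ‖) ≤ F_{(T^π θ)(x)}(t) ≤ F_R(t + γ‖θ‖)`. If `θ(x,i) > (1-δ)‖θ‖`,
then `θ(x,i) > (1-δ-γ)M + γ‖θ‖`, so the left limit of the target CDF at `θ(x,i)` exceeds
`F_R((1-δ-γ)M) > 1 - 1/(4m)`, whereas `τ_i ≤ 1 - 1/(2m)`. Symmetrically, if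
`θ(x,i) < -(1-δ)‖θ‖` then `θ(x,i) + γ‖θ‖ < -(1-δ-γ)M`, so the target CDF at `θ(x,i)` is below
`1/(4m)`, whereas `τ_i ≥ 1/(2m)`.
-/

lemma cdf_le_cdf_of_measure_Iic_le {μ ν : Measure ℝ} [IsProbabilityMeasure μ]
    [IsProbabilityMeasure ν] {s t : ℝ} (h : μ (Iic s) ≤ ν (Iic t)) : cdf μ s ≤ cdf ν t := by
  rw [cdf_eq_real, cdf_eq_real]
  exact ENNReal.toReal_mono (measure_ne_top _ _) h

namespace paramDistOne

variable {m : ℕ}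

lemma isProbabilityMeasure [NeZero m] (z : Fin m → ℝ) :
    IsProbabilityMeasure (paramDistOne z) := by
  constructor
  simp [paramDistOne, ENNReal.inv_mul_cancel (NeZero.ne (m : ℝ≥0∞)) (ENNReal.natCast_ne_top m)]

lemma ae_of_forall {z : Fin m → ℝ} {p : ℝ → Prop} (hp : ∀ j, p (z j)) :
    ∀ᵐ w ∂(paramDistOne z), p w := by
  refine Measure.ae_smul_measure ?_ _
  rw [← Measure.sum_fintype, Measure.ae_sum_iff]
  intro j
  simpa [ae_dirac_eq] using hp j

end paramDistOne

lemma qlevel_mem_Icc {m : ℕ} (i : Fin m) :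
    qlevel m i ∈ Icc (1 / (2 * (m : ℝ))) (1 - 1 / (2 * (m : ℝ))) := by
  have hm : (0 : ℝ) < m := by exact_mod_cast i.pos
  have hi : (i : ℝ) + 1 ≤ m := by exact_mod_cast i.isLt
  rw [qlevel, mem_Icc, div_le_div_iff_of_pos_right (by positivity), div_le_iff₀ (by positivity)]
  constructor
  · linarith [(i : ℕ).cast_nonneg (α := ℝ)]
  · field_simp
    linarith

instance {X : Type*} {m : ℕ} [NeZero m] (θ : X → Fin m → ℝ) (y : X) :
    IsProbabilityMeasure (paramDist θ y) :=
  paramDistOne.isProbabilityMeasure (θ y)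

lemma ae_abs_le_norm_paramDist {X : Type*} [Fintype X] {m : ℕ} (θ : X → Fin m → ℝ) (y : X) :
    ∀ᵐ z ∂(paramDist θ y), |z| ≤ ‖θ‖ :=
  paramDistOne.ae_of_forall fun j => (norm_le_pi_norm (θ y) j).trans (norm_le_pi_norm θ y)

noncomputable def bellmanKernel {X : Type*} (γ : ℝ) (η : X → Measure ℝ) (p : ℝ × X) : Measure ℝ :=
  (η p.2).map (fun z => p.1 + γ * z)

instance {X : Type*} {γ : ℝ} {η : X → Measure ℝ} [∀ y, IsProbabilityMeasure (η y)] (p : ℝ × X) :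
    IsProbabilityMeasure (bellmanKernel γ η p) :=
  Measure.isProbabilityMeasure_map (by fun_prop)

section Bellman

variable {X : Type*} {γ B t : ℝ} {η : X → Measure ℝ}

lemma measurable_bellmanKernel [MeasurableSpace X] [Countable X] [MeasurableSingletonClass X]
    [∀ y, SFinite (η y)] :
    Measurable (bellmanKernel γ η) := by
  refine Measure.measurable_of_measurable_coe _ fun s hs => ?_
  refine measurable_from_prod_countable_left fun y => ?_
  have hS : MeasurableSet ((fun q : ℝ × ℝ => q.1 + γ * q.2) ⁻¹' s) := hs.preimage (by fun_prop)
  have h (r : ℝ) : bellmanKernel γ η (r, y) s =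
      η y (Prod.mk r ⁻¹' ((fun q : ℝ × ℝ => q.1 + γ * q.2) ⁻¹' s)) :=
    Measure.map_apply (by fun_prop) hs
  simpa only [h] using measurable_measure_prodMk_left hS

lemma bellmanKernel_Iic_eq_zero (hγ : 0 ≤ γ) (hη : ∀ y, ∀ᵐ z ∂(η y), |z| ≤ B) {p : ℝ × X}
    (hp : t + γ * B < p.1) : bellmanKernel γ η p (Iic t) = 0 := by
  rw [bellmanKernel, Measure.map_apply (by fun_prop) measurableSet_Iic]
  refine measure_mono_null ?_ (ae_iff.1 (hη p.2))
  intro z hz hzB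
  have : -(γ * B) ≤ γ * z := by nlinarith [neg_abs_le z]
  simp only [mem_preimage, mem_Iic] at hz
  linarith

lemma bellmanKernel_Iic_eq_one [∀ y, IsProbabilityMeasure (η y)] (hγ : 0 ≤ γ)
    (hη : ∀ y, ∀ᵐ z ∂(η y), |z| ≤ B) {p : ℝ × X} (hp : p.1 ≤ t - γ * B) :
    bellmanKernel γ η p (Iic t) = 1 := by
  rw [bellmanKernel, Measure.map_apply (by fun_prop) measurableSet_Iic,
    ← prob_compl_eq_zero_iff (measurableSet_Iic.preimage (by fun_prop))]
  refine measure_mono_null ?_ (ae_iff.1 (hη p.2))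
  intro z hz hzB
  refine hz ?_
  have : γ * z ≤ γ * B := mul_le_mul_of_nonneg_left (le_of_abs_le hzB) hγ
  simp only [mem_preimage, mem_Iic]
  linarith

end Bellman

section BellmanCDF

variable {X : Type*} [MeasurableSpace X] [Countable X] [MeasurableSingletonClass X]
  (P : X → Measure (ℝ × X)) (x : X) {γ B : ℝ} {η : X → Measure ℝ}
  [∀ y, IsProbabilityMeasure (η y)]

lemma bellman_apply {s : Set ℝ} (hs : MeasurableSet s) :
    bellman P γ η x s = ∫⁻ p, bellmanKernel γ η p s ∂(P x) :=
  Measure.bind_apply hs measurable_bellmanKernel.aemeasurable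

instance isProbabilityMeasure_bellman [IsProbabilityMeasure (P x)] :
    IsProbabilityMeasure (bellman P γ η x) :=
  isProbabilityMeasure_bind measurable_bellmanKernel.aemeasurable
    (ae_of_all _ fun p => inferInstanceAs (IsProbabilityMeasure (bellmanKernel γ η p)))

lemma map_fst_Iic_sub_le_bellman_Iic (hγ : 0 ≤ γ) (hη : ∀ y, ∀ᵐ z ∂(η y), |z| ≤ B) (t : ℝ) :
    (P x).map Prod.fst (Iic (t - γ * B)) ≤ bellman P γ η x (Iic t) := by
  rw [bellman_apply P x measurableSet_Iic, Measure.map_apply measurable_fst measurableSet_Iic,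
    ← lintegral_indicator_one (measurable_fst measurableSet_Iic)]
  refine lintegral_mono fun p => ?_
  by_cases hp : p.1 ≤ t - γ * B
  · simp [indicator_of_mem (show p ∈ Prod.fst ⁻¹' Iic (t - γ * B) from hp),
      bellmanKernel_Iic_eq_one hγ hη hp]
  · simp [indicator_of_notMem (show p ∉ Prod.fst ⁻¹' Iic (t - γ * B) from hp)]

lemma bellman_Iic_le_map_fst_Iic_add (hγ : 0 ≤ γ) (hη : ∀ y, ∀ᵐ z ∂(η y), |z| ≤ B) (t : ℝ) :
    bellman P γ η x (Iic t) ≤ (P x).map Prod.fst (Iic (t + γ * B)) := by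
  rw [bellman_apply P x measurableSet_Iic, Measure.map_apply measurable_fst measurableSet_Iic,
    ← lintegral_indicator_one (measurable_fst measurableSet_Iic)]
  refine lintegral_mono fun p => ?_
  by_cases hp : p.1 ≤ t + γ * B
  · simpa [indicator_of_mem (show p ∈ Prod.fst ⁻¹' Iic (t + γ * B) from hp)] using prob_le_one
  · simp [bellmanKernel_Iic_eq_zero hγ hη (not_le.1 hp)]

variable [IsProbabilityMeasure (P x)]

lemma cdf_map_fst_sub_le_cdf_bellman (hγ : 0 ≤ γ) (hη : ∀ y, ∀ᵐ z ∂(η y), |z| ≤ B) (t : ℝ) :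
    cdf ((P x).map Prod.fst) (t - γ * B) ≤ cdf (bellman P γ η x) t :=
  have := Measure.isProbabilityMeasure_map (μ := P x) measurable_fst.aemeasurable
  cdf_le_cdf_of_measure_Iic_le (map_fst_Iic_sub_le_bellman_Iic P x hγ hη t)

lemma cdf_bellman_le_cdf_map_fst_add (hγ : 0 ≤ γ) (hη : ∀ y, ∀ᵐ z ∂(η y), |z| ≤ B) (t : ℝ) :
    cdf (bellman P γ η x) t ≤ cdf ((P x).map Prod.fst) (t + γ * B) :=
  have := Measure.isProbabilityMeasure_map (μ := P x) measurable_fst.aemeasurable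
  cdf_le_cdf_of_measure_Iic_le (bellman_Iic_le_map_fst_Iic_add P x hγ hη t)

end BellmanCDF

theorem qtd_inward_drift_general
    {X : Type*} [Fintype X] [MeasurableSpace X] [MeasurableSingletonClass X]
    (P : X → Measure (ℝ × X)) (hP : ∀ x, IsProbabilityMeasure (P x))
    (γ : ℝ) (hγ0 : 0 ≤ γ) {m : ℕ}
    (δ : ℝ) (hδγ : γ < 1 - δ)
    (M : ℝ)
    (hR1 : ∀ x, 1 - 1 / (4 * (m:ℝ)) < cdf ((P x).map Prod.fst) ((1 - δ - γ) * M))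
    (hR2 : ∀ x, cdf ((P x).map Prod.fst) (-((1 - δ - γ) * M)) < 1 / (4 * (m:ℝ)))
    (θ : X → Fin m → ℝ) (hθ : M < ‖θ‖) (x : X) (i : Fin m) :
    ((1 - δ) * ‖θ‖ < θ x i →
      qlevel m i -
          Function.leftLim (fun t => cdf (bellman P γ (paramDist θ) x) t) (θ x i)
        ≤ -(1 / (4 * (m:ℝ))))
    ∧ (θ x i < -((1 - δ) * ‖θ‖) →
      1 / (4 * (m:ℝ)) ≤ qlevel m i - cdf (bellman P γ (paramDist θ) x) (θ x i)) := by
  have := hP x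
  have : NeZero m := ⟨i.pos.ne'⟩
  have hη := ae_abs_le_norm_paramDist θ
  have hτ := qlevel_mem_Icc i
  have hquarter : 1 / (2 * (m : ℝ)) = 2 * (1 / (4 * m)) := by field_simp; ring
  have hgap : (1 - δ - γ) * M < (1 - δ - γ) * ‖θ‖ := mul_lt_mul_of_pos_left hθ (by linarith)
  constructor
  · intro hpos
    have hlow := cdf_map_fst_sub_le_cdf_bellman P x hγ0 hη ((1 - δ - γ) * M + γ * ‖θ‖)
    rw [add_sub_cancel_right] at hlow
    have hleft := (cdf (bellman P γ (paramDist θ) x)).mono.le_leftLim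
      (show (1 - δ - γ) * M + γ * ‖θ‖ < θ x i by linarith)
    linarith [hR1 x, hτ.2]
  · intro hneg
    have hup := cdf_bellman_le_cdf_map_fst_add P x hγ0 hη (θ x i)
    have hmono := (cdf ((P x).map Prod.fst)).mono
      (show θ x i + γ * ‖θ‖ ≤ -((1 - δ - γ) * M) by linarith)
    linarith [hR2 x, hτ.1]

/-- Inward drift of the QTD vector field at large parameter values: if
`‖θ‖_∞ > M` (for `M` as in the displayed reward-CDF conditions) then near-maximal positive
coordinates have expected update at most `−1/(4m)` (using the left limit of the CDF), and
near-maximal negative coordinates have expected update at least `1/(4m)`. -/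
theorem qtd_inward_drift
    {X : Type*} [Fintype X] [MeasurableSpace X] [MeasurableSingletonClass X]
    (P : X → Measure (ℝ × X)) (hP : ∀ x, IsProbabilityMeasure (P x))
    (hPmean : ∀ x, Integrable (fun p : ℝ × X => p.1) (P x))
    (γ : ℝ) (hγ0 : 0 ≤ γ) (hγ1 : γ < 1) {m : ℕ} (hm : 0 < m)
    (δ : ℝ) (hδ : δ ∈ Set.Ioo (0:ℝ) 1) (hδγ : γ < 1 - δ)
    (M : ℝ) (hM : 0 < M)
    (hR1 : ∀ x, 1 - 1 / (4 * (m:ℝ)) < cdf ((P x).map Prod.fst) ((1 - δ - γ) * M))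
    (hR2 : ∀ x, cdf ((P x).map Prod.fst) (-((1 - δ - γ) * M)) < 1 / (4 * (m:ℝ)))
    (θ : X → Fin m → ℝ) (hθ : M < ‖θ‖) (x : X) (i : Fin m) :
    ((1 - δ) * ‖θ‖ < θ x i →
      qlevel m i -
          Function.leftLim (fun t => cdf (bellman P γ (paramDist θ) x) t) (θ x i)
        ≤ -(1 / (4 * (m:ℝ))))
    ∧ (θ x i < -((1 - δ) * ‖θ‖) →
      1 / (4 * (m:ℝ)) ≤ qlevel m i - cdf (bellman P γ (paramDist θ) x) (θ x i)) :=
  qtd_inward_drift_general P hP γ hγ0 δ hδγ M hR1 hR2 θ hθ x i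
end
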